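/- arXiv:2302.06311 — 3 statements merged into one kernel-verified Lean document; each statement's English description precedes it below -/
import Mathlib

section
/- Bounded martingale differences of the ERW martingale: for every p ∈ (0, 1] and every k ≥ 1, |ΔM_k| ≤ 2 a_k almost surely, where ΔM_k = M_k − M_{k−1}. -/
open MeasureTheory ProbabilityTheory Filter Set
open scoped ENNReal

/-! Since `X₁ = ±1`, `Aₙ = ±1` and `Bₙ < n` almost surely, every step is `±1`, so `|Tₙ| ≤ n`.
The functional equation of `Γ` gives `n (aₙ₊₁ − aₙ) = (1 − 2p) aₙ₊₁`, hence
`ΔMₙ₊₁ = aₙ₊₁ Xₙ₊₁ + (aₙ₊₁ − aₙ) Tₙ` is bounded by `(1 + |1 − 2p|) aₙ₊₁ ≤ 2 aₙ₊₁`. -/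

/-- The weights `aₙ = Γ(n)Γ(2p)/Γ(n+2p−1)` of the elephant random walk
(note that the formula also gives `a₁ = 1`). -/
noncomputable def erwA (p : ℝ) (n : ℕ) : ℝ :=
  Real.Gamma n * Real.Gamma (2 * p) / Real.Gamma ((n : ℝ) + 2 * p - 1)

/-- The martingale `M₀ = 0`, `Mₙ = aₙTₙ − (2q−1)` where `Tₙ = Σ_{i=1}^n Xᵢ`. -/
noncomputable def erwM {Ω : Type*} (p q : ℝ) (X : ℕ → Ω → ℝ) (n : ℕ) (ω : Ω) : ℝ :=
  if n = 0 then 0 else erwA p n * (∑ i ∈ Finset.Icc 1 n, X i ω) - (2 * q - 1)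

section Fibers

variable {Ω β : Type*} [MeasurableSpace Ω] {μ : Measure Ω} [IsProbabilityMeasure μ]
  [MeasurableSpace β] [MeasurableSingletonClass β] {f : Ω → β}

lemma ae_mem_of_one_le_sum_measure_fiber (hf : Measurable f) (s : Finset β)
    (hs : 1 ≤ ∑ b ∈ s, μ (f ⁻¹' {b})) : ∀ᵐ ω ∂μ, f ω ∈ s := by
  rw [sum_measure_preimage_singleton s fun b _ => hf (measurableSet_singleton b),
    one_le_prob_iff] at hs
  exact (mem_ae_iff_prob_eq_one (hf s.measurableSet)).2 hs

lemma ae_mem_of_measure_fiber_eq_inv_card (hf : Measurable f) {s : Finset β}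
    (hs : s.Nonempty) (h : ∀ b ∈ s, μ (f ⁻¹' {b}) = (s.card : ℝ≥0∞)⁻¹) :
    ∀ᵐ ω ∂μ, f ω ∈ s := by
  refine ae_mem_of_one_le_sum_measure_fiber hf s (le_of_eq ?_)
  rw [Finset.sum_congr rfl h, Finset.sum_const, nsmul_eq_mul,
    ENNReal.mul_inv_cancel (by simpa using hs.ne_empty) (by simp)]

end Fibers

lemma ae_abs_eq_one_of_measure_eq {Ω : Type*} [MeasurableSpace Ω] {μ : Measure Ω}
    [IsProbabilityMeasure μ] {f : Ω → ℝ} (hf : Measurable f) {r : ℝ}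
    (h₁ : μ {ω | f ω = 1} = ENNReal.ofReal r) (h₂ : μ {ω | f ω = -1} = ENNReal.ofReal (1 - r)) :
    ∀ᵐ ω ∂μ, |f ω| = 1 := by
  have hsum : 1 ≤ ∑ b ∈ {1, -1}, μ (f ⁻¹' {b}) := by
    rw [Finset.sum_pair (by norm_num)]
    calc (1 : ℝ≥0∞) = ENNReal.ofReal (r + (1 - r)) := by simp
      _ ≤ _ := h₁ ▸ h₂ ▸ ENNReal.ofReal_add_le
  filter_upwards [ae_mem_of_one_le_sum_measure_fiber hf _ hsum] with ω hω
  rcases Finset.mem_insert.1 hω with h | h <;> simp_all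

lemma abs_eq_one_of_eq_mul_earlier {x a : ℕ → ℝ} {b : ℕ → ℕ} (h₁ : |x 1| = 1)
    (ha : ∀ n, 2 ≤ n → |a n| = 1) (hb : ∀ n, 2 ≤ n → b n ∈ Finset.Icc 1 (n - 1))
    (hx : ∀ n, 2 ≤ n → x n = a n * x (b n)) : ∀ n, 1 ≤ n → |x n| = 1 := by
  intro n
  induction n using Nat.strong_induction_on with
  | _ n ih =>
    intro hn
    obtain rfl | hn₂ := hn.eq_or_lt
    · exact h₁
    · have hbn := Finset.mem_Icc.1 (hb n hn₂)
      rw [hx n hn₂, abs_mul, ha n hn₂, ih _ (by omega) hbn.1, one_mul]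

section Weights

variable {p : ℝ}

lemma erwA_pos (hp : 0 < p) {n : ℕ} (hn : 1 ≤ n) : 0 < erwA p n := by
  have hn' : (1 : ℝ) ≤ n := by exact_mod_cast hn
  unfold erwA
  have := Real.Gamma_pos_of_pos (s := n) (by linarith)
  have := Real.Gamma_pos_of_pos (s := 2 * p) (by linarith)
  have := Real.Gamma_pos_of_pos (s := n + 2 * p - 1) (by linarith)
  positivity

lemma erwA_one (hp : 0 < p) : erwA p 1 = 1 := by
  have : Real.Gamma (2 * p) ≠ 0 := (Real.Gamma_pos_of_pos (by linarith)).ne'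
  simp [erwA, this]

lemma natCast_mul_erwA_succ_sub (hp : 0 < p) {n : ℕ} (hn : 1 ≤ n) :
    (n : ℝ) * (erwA p (n + 1) - erwA p n) = (1 - 2 * p) * erwA p (n + 1) := by
  have hn' : (1 : ℝ) ≤ n := by exact_mod_cast hn
  have hc : (0 : ℝ) < n + 2 * p - 1 := by linarith
  have hΓn : Real.Gamma (n + 1) = n * Real.Gamma n := Real.Gamma_add_one (by linarith)
  have hΓc : Real.Gamma (n + 2 * p) = (n + 2 * p - 1) * Real.Gamma (n + 2 * p - 1) := by
    rw [← Real.Gamma_add_one hc.ne', sub_add_cancel]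
  have := (Real.Gamma_pos_of_pos hc).ne'
  have hs : ((n + 1 : ℕ) : ℝ) + 2 * p - 1 = n + 2 * p := by push_cast; ring
  rw [erwA, erwA, hs, Nat.cast_succ, hΓn, hΓc]
  field_simp
  ring

lemma abs_erwA_succ_sub_mul_le (hp : p ∈ Ioc 0 1) {n : ℕ} (hn : 1 ≤ n) {t : ℝ}
    (ht : |t| ≤ n) : |(erwA p (n + 1) - erwA p n) * t| ≤ erwA p (n + 1) := by
  have hn' : (0 : ℝ) < n := by exact_mod_cast hn
  have ha := erwA_pos hp.1 (Nat.le_succ_of_le hn)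
  have h2p : |1 - 2 * p| ≤ 1 := abs_le.2 ⟨by linarith [hp.2], by linarith [hp.1]⟩
  refine le_of_mul_le_mul_left ?_ hn'
  calc (n : ℝ) * |(erwA p (n + 1) - erwA p n) * t|
      = |1 - 2 * p| * erwA p (n + 1) * |t| := by
        rw [← abs_of_pos hn', ← abs_mul, ← mul_assoc, natCast_mul_erwA_succ_sub hp.1 hn,
          abs_mul, abs_mul, abs_of_pos ha]
    _ ≤ 1 * erwA p (n + 1) * n := by gcongr
    _ = n * erwA p (n + 1) := by ring

end Weights

section Increments

variable {Ω : Type*} {p q : ℝ} {X : ℕ → Ω → ℝ} {ω : Ω}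

lemma erwM_succ_sub_erwM {n : ℕ} (hn : 1 ≤ n) :
    erwM p q X (n + 1) ω - erwM p q X n ω =
      erwA p (n + 1) * X (n + 1) ω + (erwA p (n + 1) - erwA p n) * ∑ i ∈ Finset.Icc 1 n, X i ω := by
  rw [erwM, erwM, if_neg n.succ_ne_zero, if_neg (by omega),
    Finset.sum_Icc_succ_top (by omega)]
  ring

lemma abs_sum_Icc_le {x : ℕ → ℝ} {n : ℕ} (hx : ∀ i ∈ Finset.Icc 1 n, |x i| ≤ 1) :
    |∑ i ∈ Finset.Icc 1 n, x i| ≤ n := by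
  calc |∑ i ∈ Finset.Icc 1 n, x i| ≤ ∑ i ∈ Finset.Icc 1 n, |x i| :=
        Finset.abs_sum_le_sum_abs _ _
    _ ≤ ∑ _i ∈ Finset.Icc 1 n, (1 : ℝ) := Finset.sum_le_sum hx
    _ = n := by simp

lemma abs_erwM_succ_sub_erwM_le (hp : p ∈ Ioc 0 1) {n : ℕ} (hn : 1 ≤ n)
    (hX : ∀ i ∈ Finset.Icc 1 (n + 1), |X i ω| ≤ 1) :
    |erwM p q X (n + 1) ω - erwM p q X n ω| ≤ 2 * erwA p (n + 1) := by
  have hXn : ∀ i ∈ Finset.Icc 1 n, |X i ω| ≤ 1 := fun i hi =>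
    hX i (Finset.Icc_subset_Icc_right n.le_succ hi)
  have hlast : |X (n + 1) ω| ≤ 1 := hX _ (Finset.mem_Icc.2 ⟨by omega, le_rfl⟩)
  have ha := erwA_pos hp.1 (Nat.le_succ_of_le hn)
  rw [erwM_succ_sub_erwM hn]
  calc _ ≤ |erwA p (n + 1) * X (n + 1) ω|
        + |(erwA p (n + 1) - erwA p n) * ∑ i ∈ Finset.Icc 1 n, X i ω| := abs_add_le _ _
    _ ≤ erwA p (n + 1) * 1 + erwA p (n + 1) := by
        rw [abs_mul, abs_of_pos ha]
        gcongr
        exact abs_erwA_succ_sub_mul_le hp hn (abs_sum_Icc_le hXn)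
    _ = 2 * erwA p (n + 1) := by ring

lemma abs_erwM_one_sub_erwM_zero_le (hp : 0 < p) (hq : q ∈ Icc 0 1) (hX : |X 1 ω| ≤ 1) :
    |erwM p q X 1 ω - erwM p q X 0 ω| ≤ 2 * erwA p 1 := by
  simp only [erwM, one_ne_zero, if_false, if_true, erwA_one hp, Finset.Icc_self,
    Finset.sum_singleton]
  rw [abs_le] at hX ⊢
  constructor <;> linarith [hq.1, hq.2, hX.1, hX.2]

lemma abs_erwM_sub_erwM_pred_le (hp : p ∈ Ioc 0 1) (hq : q ∈ Icc 0 1) {k : ℕ} (hk : 1 ≤ k)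
    (hX : ∀ i ∈ Finset.Icc 1 k, |X i ω| ≤ 1) :
    |erwM p q X k ω - erwM p q X (k - 1) ω| ≤ 2 * erwA p k := by
  obtain rfl | hk₂ := hk.eq_or_lt
  · exact abs_erwM_one_sub_erwM_zero_le hp.1 hq (hX 1 (by simp))
  · obtain ⟨n, rfl⟩ : ∃ n, k = n + 1 := ⟨k - 1, by omega⟩
    exact abs_erwM_succ_sub_erwM_le hp (by omega) hX

end Increments

theorem erw_martingale_diff_bounded_general
    {Ω : Type} [MeasurableSpace Ω] (μ : Measure Ω) [IsProbabilityMeasure μ]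
    (p q : ℝ) (hp : p ∈ Set.Ioc (0 : ℝ) 1) (hq : q ∈ Set.Ioc (0 : ℝ) 1)
    (X A : ℕ → Ω → ℝ) (B : ℕ → Ω → ℕ)
    (hXmeas : ∀ n, Measurable (X n)) (hAmeas : ∀ n, Measurable (A n))
    (hBmeas : ∀ n, Measurable (B n))
    (hX1 : μ {ω | X 1 ω = 1} = ENNReal.ofReal q)
    (hX1' : μ {ω | X 1 ω = -1} = ENNReal.ofReal (1 - q))
    (hA : ∀ n, 2 ≤ n → μ {ω | A n ω = 1} = ENNReal.ofReal p)
    (hA' : ∀ n, 2 ≤ n → μ {ω | A n ω = -1} = ENNReal.ofReal (1 - p))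
    (hB : ∀ n, 2 ≤ n → ∀ k ∈ Finset.Icc 1 (n - 1),
      μ {ω | B n ω = k} = (((n - 1 : ℕ) : ℝ≥0∞))⁻¹)
    (hXrec : ∀ n, 2 ≤ n → ∀ ω, X n ω = A n ω * X (B n ω) ω) :
    ∀ k : ℕ, 1 ≤ k → ∀ᵐ ω ∂μ,
      |erwM p q X k ω - erwM p q X (k - 1) ω| ≤ 2 * erwA p k := by
  intro k hk
  have hBunif : ∀ n, 2 ≤ n → ∀ᵐ ω ∂μ, B n ω ∈ Finset.Icc 1 (n - 1) := fun n hn =>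
    ae_mem_of_measure_fiber_eq_inv_card (hBmeas n) (Finset.nonempty_Icc.2 (by omega))
      (by simpa [Set.preimage, Nat.card_Icc] using hB n hn)
  have hAB : ∀ᵐ ω ∂μ, ∀ n, 2 ≤ n → |A n ω| = 1 ∧ B n ω ∈ Finset.Icc 1 (n - 1) :=
    ae_all_iff.2 fun n => eventually_imp_distrib_left.2 fun hn =>
      (ae_abs_eq_one_of_measure_eq (hAmeas n) (hA n hn) (hA' n hn)).and (hBunif n hn)
  filter_upwards [ae_abs_eq_one_of_measure_eq (hXmeas 1) hX1 hX1', hAB] with ω hω₁ hωAB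
  have hXabs := abs_eq_one_of_eq_mul_earlier hω₁ (fun n hn => (hωAB n hn).1)
    (fun n hn => (hωAB n hn).2) (fun n hn => hXrec n hn ω)
  exact abs_erwM_sub_erwM_pred_le hp (Ioc_subset_Icc_self hq) hk
    fun i hi => (hXabs i (Finset.mem_Icc.1 hi).1).le

/-- Bounded martingale differences of the ERW martingale: for every `p ∈ (0, 1]` and every
`k ≥ 1`, `|ΔM_k| ≤ 2 a_k` almost surely, where `ΔM_k = M_k − M_{k−1}`. -/
theorem erw_martingale_diff_bounded
    {Ω : Type} [MeasurableSpace Ω] (μ : Measure Ω) [IsProbabilityMeasure μ]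
    (p q : ℝ) (hp : p ∈ Set.Ioc (0 : ℝ) 1) (hq : q ∈ Set.Ioc (0 : ℝ) 1)
    (X A : ℕ → Ω → ℝ) (B : ℕ → Ω → ℕ)
    (hXmeas : ∀ n, Measurable (X n)) (hAmeas : ∀ n, Measurable (A n))
    (hBmeas : ∀ n, Measurable (B n))
    (hX1 : μ {ω | X 1 ω = 1} = ENNReal.ofReal q)
    (hX1' : μ {ω | X 1 ω = -1} = ENNReal.ofReal (1 - q))
    (hA : ∀ n, 2 ≤ n → μ {ω | A n ω = 1} = ENNReal.ofReal p)
    (hA' : ∀ n, 2 ≤ n → μ {ω | A n ω = -1} = ENNReal.ofReal (1 - p))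
    (hB : ∀ n, 2 ≤ n → ∀ k ∈ Finset.Icc 1 (n - 1),
      μ {ω | B n ω = k} = (((n - 1 : ℕ) : ℝ≥0∞))⁻¹)
    (hXrec : ∀ n, 2 ≤ n → ∀ ω, X n ω = A n ω * X (B n ω) ω)
    (hindep : iIndep (Sum.elim (fun _ : Unit => MeasurableSpace.comap (X 1) inferInstance)
        (Sum.elim (fun k : ℕ => MeasurableSpace.comap (A (k + 2)) inferInstance)
          (fun k : ℕ => MeasurableSpace.comap (B (k + 2)) inferInstance))) μ) :
    ∀ k : ℕ, 1 ≤ k → ∀ᵐ ω ∂μ,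
      |erwM p q X k ω - erwM p q X (k - 1) ω| ≤ 2 * erwA p k :=
  erw_martingale_diff_bounded_general μ p q hp hq X A B hXmeas hAmeas hBmeas hX1 hX1' hA hA' hB
    hXrec
end

section
/- Conditional third moment of the ERW martingale differences: for every k ≥ 2, almost surely E[ (ΔM_k)³ | F_{k−1} ] = 2(2p−1) a_k³ ( −T_{k−1}/(k−1) + (2p−1)² T_{k−1}³/(k−1)³ ); in particular |E[ (ΔM_k)³ | F_{k−1} ]| ≤ 4 a_k³ |T_{k−1}/(k−1)| almost surely. -/
open MeasureTheory ProbabilityTheory Filter Set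
open scoped ENNReal

/-- `vₙ = Σ_{i=1}^n aᵢ²`. -/
noncomputable def erwV (p : ℝ) (n : ℕ) : ℝ :=
  ∑ i ∈ Finset.Icc 1 n, (erwA p i) ^ 2

/-- The filtration `F₀` trivial, `Fₙ = σ(X₁, αᵢ, βᵢ : 2 ≤ i ≤ n)`. -/
noncomputable def erwFilt {Ω : Type*} (X A : ℕ → Ω → ℝ) (B : ℕ → Ω → ℕ) (n : ℕ) :
    MeasurableSpace Ω :=
  if n = 0 then ⊥ else
    MeasurableSpace.comap (X 1) inferInstance ⊔
      ⨆ i ∈ Set.Icc 2 n,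
        (MeasurableSpace.comap (A i) inferInstance ⊔ MeasurableSpace.comap (B i) inferInstance)

/-!
Write `c = 2p − 1`, `Tₙ = X₁ + ⋯ + Xₙ` and `Y = c T_{k−1}/(k−1)`. The recursion
`(k + 2p − 2) a_k = (k − 1) a_{k−1}` of the Gamma quotients gives `ΔM_k = a_k (X_k − Y)`.
Since `X_k = α_k X_{β_k}`, with `α_k` independent of `β_k` and `F_{k−1}`, and `β_k` uniform on
`{1, …, k−1}` and independent of `F_{k−1}`, we get `E[X_k | F_{k−1}] = E[α_k] T_{k−1}/(k−1) = Y`.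
As `X_k² = 1`, `(X_k − Y)³ = (1 + 3Y²) X_k − 3Y − Y³`, so conditioning on `F_{k−1}` leaves
`2 a_k³ (Y³ − Y)`, which is the claimed formula. The bound follows from `|c| ≤ 1` and
`|T_{k−1}| ≤ k − 1`.
-/

section Laws

variable {Ω : Type*} {mΩ : MeasurableSpace Ω} {μ : Measure Ω} [IsProbabilityMeasure μ]

lemma ae_eq_one_or_eq_neg_one {f : Ω → ℝ} (hf : Measurable f) {r : ℝ} (hr₀ : 0 ≤ r)
    (hr₁ : r ≤ 1) (h₁ : μ {ω | f ω = 1} = ENNReal.ofReal r)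
    (hneg : μ {ω | f ω = -1} = ENNReal.ofReal (1 - r)) :
    ∀ᵐ ω ∂μ, f ω = 1 ∨ f ω = -1 := by
  have hm : ∀ x : ℝ, MeasurableSet {ω | f ω = x} := fun x => hf (measurableSet_singleton x)
  refine (ae_iff_measure_eq ((hm 1).union (hm (-1))).nullMeasurableSet).2 ?_
  change μ ({ω | f ω = 1} ∪ {ω | f ω = -1}) = μ univ
  have hdisj : Disjoint {ω | f ω = 1} {ω | f ω = -1} :=
    Set.disjoint_left.2 fun ω h h' => by rw [Set.mem_ofPred_eq] at h h'; linarith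
  rw [measure_union hdisj (hm (-1)), h₁, hneg, ← ENNReal.ofReal_add hr₀ (by linarith)]
  simp

lemma integral_eq_two_mul_sub_one {f : Ω → ℝ} (hf : Measurable f) {r : ℝ} (hr₀ : 0 ≤ r)
    (hr₁ : r ≤ 1) (h₁ : μ {ω | f ω = 1} = ENNReal.ofReal r)
    (hneg : μ {ω | f ω = -1} = ENNReal.ofReal (1 - r)) :
    ∫ ω, f ω ∂μ = 2 * r - 1 := by
  have hm : ∀ x : ℝ, MeasurableSet {ω | f ω = x} := fun x => hf (measurableSet_singleton x)
  have hf_eq : f =ᵐ[μ] fun ω => {ω | f ω = 1}.indicator 1 ω - {ω | f ω = -1}.indicator 1 ω := by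
    filter_upwards [ae_eq_one_or_eq_neg_one hf hr₀ hr₁ h₁ hneg] with ω hω
    rcases hω with hω | hω <;> norm_num [Set.indicator_apply, hω]
  rw [integral_congr_ae hf_eq, integral_sub ((integrable_const 1).indicator (hm 1))
    ((integrable_const 1).indicator (hm (-1))), integral_indicator_one (hm 1),
    integral_indicator_one (hm (-1)), measureReal_def, measureReal_def, h₁, hneg,
    ENNReal.toReal_ofReal hr₀, ENNReal.toReal_ofReal (by linarith)]
  ring

lemma ae_mem_of_measure_eq_inv_card {ι : Type*} [MeasurableSpace ι] [MeasurableSingletonClass ι]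
    {b : Ω → ι} (hb : Measurable b) {s : Finset ι} (hs : s.Nonempty)
    (h : ∀ i ∈ s, μ {ω | b ω = i} = (s.card : ℝ≥0∞)⁻¹) :
    ∀ᵐ ω ∂μ, b ω ∈ s := by
  have hpre : μ (b ⁻¹' s) = 1 := by
    rw [← sum_measure_preimage_singleton s fun i _ => hb (measurableSet_singleton i),
      show ∑ i ∈ s, μ (b ⁻¹' {i}) = ∑ _i ∈ s, (s.card : ℝ≥0∞)⁻¹ from Finset.sum_congr rfl h,
      Finset.sum_const, nsmul_eq_mul]
    exact ENNReal.mul_inv_cancel (by simp [hs.ne_empty]) (by simp)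
  exact (ae_iff_measure_eq (hb s.measurableSet).nullMeasurableSet).2 (hpre.trans measure_univ.symm)

end Laws

section ConditionalCube

variable {Ω : Type*} {m m₀ : MeasurableSpace Ω} {μ : Measure Ω}

theorem condExp_sub_condExp_pow_three [IsFiniteMeasure μ] (hm : m ≤ m₀) {X : Ω → ℝ}
    (hX : AEStronglyMeasurable X μ) (hX2 : ∀ᵐ ω ∂μ, X ω ^ 2 = 1) :
    μ[fun ω => (X ω - μ[X|m] ω) ^ 3 | m] =ᵐ[μ] fun ω => 2 * (μ[X|m] ω ^ 3 - μ[X|m] ω) := by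
  set Y := μ[X|m]
  have hXb : ∀ᵐ ω ∂μ, |X ω| ≤ 1 := hX2.mono fun ω h => by
    rw [← sq_le_one_iff_abs_le_one]; exact h.le
  have hYb : ∀ᵐ ω ∂μ, |Y ω| ≤ 1 := ae_bdd_abs_condExp_of_ae_bdd_abs hXb
  have hYm : StronglyMeasurable[m] Y := stronglyMeasurable_condExp
  have hXi : Integrable X μ := .of_bound hX 1 hXb
  have hPm : StronglyMeasurable[m] (fun ω => 1 + 3 * Y ω ^ 2) :=
    stronglyMeasurable_const.add ((hYm.pow 2).const_mul 3)
  have hQm : StronglyMeasurable[m] (fun ω => 3 * Y ω + Y ω ^ 3) :=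
    (hYm.const_mul 3).add (hYm.pow 3)
  have hPX : Integrable (fun ω => (1 + 3 * Y ω ^ 2) * X ω) μ :=
    hXi.bdd_mul (c := 4) (hPm.mono hm).aestronglyMeasurable <| hYb.mono fun ω h => by
      rw [Real.norm_eq_abs, abs_of_pos (by positivity)]
      nlinarith [abs_le.1 h, sq_abs (Y ω)]
  have hQi : Integrable (fun ω => 3 * Y ω + Y ω ^ 3) μ :=
    .of_bound (hQm.mono hm).aestronglyMeasurable 4 <| hYb.mono fun ω h => by
      have := abs_le.1 h
      rw [Real.norm_eq_abs, abs_le]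
      constructor <;> nlinarith [sq_nonneg (Y ω + 1), sq_nonneg (Y ω - 1)]
  have hexpand : (fun ω => (X ω - Y ω) ^ 3) =ᵐ[μ]
      (fun ω => (1 + 3 * Y ω ^ 2) * X ω) - fun ω => 3 * Y ω + Y ω ^ 3 := by
    filter_upwards [hX2] with ω h
    simp only [Pi.sub_apply]
    linear_combination (X ω - 3 * Y ω) * h
  calc μ[fun ω => (X ω - Y ω) ^ 3 | m]
      =ᵐ[μ] μ[(fun ω => (1 + 3 * Y ω ^ 2) * X ω) - fun ω => 3 * Y ω + Y ω ^ 3 | m] :=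
        condExp_congr_ae hexpand
    _ =ᵐ[μ] (fun ω => 1 + 3 * Y ω ^ 2) * Y - fun ω => 3 * Y ω + Y ω ^ 3 :=
        (condExp_sub hPX hQi m).trans
          ((condExp_mul_of_aestronglyMeasurable_left hPm.aestronglyMeasurable hPX hXi).sub
            (condExp_of_stronglyMeasurable hm hQm hQi).eventuallyEq)
    _ = fun ω => 2 * (Y ω ^ 3 - Y ω) := by ext ω; simp only [Pi.sub_apply, Pi.mul_apply]; ring

end ConditionalCube

section RandomChoice

variable {Ω ι : Type*} {m₁ m₂ mΩ : MeasurableSpace Ω} {μ : Measure Ω}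

lemma indicator_one_mul_apply (t : Set Ω) (f : Ω → ℝ) (ω : Ω) :
    t.indicator 1 ω * f ω = t.indicator f ω := by
  by_cases h : ω ∈ t <;> simp [h]

lemma sum_indicator_mul_eq_of_mem {s : Finset ι} {b : Ω → ι} {ω : Ω} (h : b ω ∈ s)
    (Z : ι → Ω → ℝ) : ∑ i ∈ s, {ω | b ω = i}.indicator 1 ω * Z i ω = Z (b ω) ω := by
  classical
  simp [Set.indicator_apply, Finset.sum_ite_eq, h]

-- `Finset.aestronglyMeasurable_sum` only covers the σ-algebra on which `μ` is defined.
lemma aestronglyMeasurable_sum (s : Finset ι) {f : ι → Ω → ℝ}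
    (hf : ∀ i ∈ s, AEStronglyMeasurable[m₁] (f i) μ) :
    AEStronglyMeasurable[m₁] (fun ω => ∑ i ∈ s, f i ω) μ := by
  simp_rw [← Finset.sum_apply]
  exact Finset.sum_induction _ (fun g => AEStronglyMeasurable[m₁] g μ) (fun _ _ => .add)
    aestronglyMeasurable_const hf

lemma MeasureTheory.Integrable.indicator_one_mul {f : Ω → ℝ} (hf : Integrable f μ) {t : Set Ω}
    (ht : MeasurableSet t) : Integrable (fun ω => t.indicator 1 ω * f ω) μ := by
  simpa only [indicator_one_mul_apply] using hf.indicator ht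

lemma integral_mul_eq_mul_integral_of_indep (hm₁ : m₁ ≤ mΩ) (hm₂ : m₂ ≤ mΩ)
    (h : Indep m₁ m₂ μ) {f g : Ω → ℝ} (hf : AEStronglyMeasurable[m₁] f μ)
    (hg : AEStronglyMeasurable[m₂] g μ) :
    ∫ ω, f ω * g ω ∂μ = (∫ ω, f ω ∂μ) * ∫ ω, g ω ∂μ := by
  have hfg : IndepFun (hf.mk f) (hg.mk g) μ :=
    (IndepFun_iff_Indep _ _ _).2 <| indep_of_indep_of_le_left
      (indep_of_indep_of_le_right h hg.stronglyMeasurable_mk.measurable.comap_le)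
      hf.stronglyMeasurable_mk.measurable.comap_le
  exact (hfg.congr hf.ae_eq_mk.symm hg.ae_eq_mk.symm).integral_fun_mul_eq_mul_integral
    (hf.mono hm₁) (hg.mono hm₂)

variable [MeasurableSpace ι] [MeasurableSingletonClass ι]

lemma integral_sum_indicator_mul_of_indep (hm : m₂ ≤ mΩ) {b : Ω → ι} (hb : Measurable b)
    (h : Indep (MeasurableSpace.comap b inferInstance) m₂ μ) {s : Finset ι}
    (hbs : ∀ i ∈ s, μ {ω | b ω = i} = (s.card : ℝ≥0∞)⁻¹) {Z : ι → Ω → ℝ}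
    (hZ : ∀ i ∈ s, AEStronglyMeasurable[m₂] (Z i) μ) (hZi : ∀ i ∈ s, Integrable (Z i) μ) :
    ∫ ω, ∑ i ∈ s, {ω | b ω = i}.indicator 1 ω * Z i ω ∂μ =
      (s.card : ℝ)⁻¹ * ∑ i ∈ s, ∫ ω, Z i ω ∂μ := by
  have hbi : ∀ i, MeasurableSet[MeasurableSpace.comap b inferInstance] {ω | b ω = i} :=
    fun i => ⟨{i}, measurableSet_singleton i, rfl⟩
  have hind : ∀ i, StronglyMeasurable[MeasurableSpace.comap b inferInstance]
      ({ω | b ω = i}.indicator (1 : Ω → ℝ)) := fun i =>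
    stronglyMeasurable_const.indicator (hbi i)
  rw [integral_finsetSum _ fun i hi => (hZi i hi).indicator_one_mul (hb.comap_le _ (hbi i)),
    Finset.mul_sum]
  refine Finset.sum_congr rfl fun i hi => ?_
  rw [integral_mul_eq_mul_integral_of_indep hb.comap_le hm h (hind i).aestronglyMeasurable
    (hZ i hi), integral_indicator_one (hb.comap_le _ (hbi i)), measureReal_def, hbs i hi,
    ENNReal.toReal_inv, ENNReal.toReal_natCast]

theorem condExp_mul_sum_indicator_mul_of_indep [IsFiniteMeasure μ] (hm : m₂ ≤ mΩ) {a : Ω → ℝ}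
    (ha : Measurable a) {C : ℝ} (haC : ∀ᵐ ω ∂μ, ‖a ω‖ ≤ C) {b : Ω → ι} (hb : Measurable b)
    {s : Finset ι} (hbs : ∀ i ∈ s, μ {ω | b ω = i} = (s.card : ℝ≥0∞)⁻¹) {Z : ι → Ω → ℝ}
    (hZ : ∀ i ∈ s, AEStronglyMeasurable[m₂] (Z i) μ) (hZi : ∀ i ∈ s, Integrable (Z i) μ)
    (hia : Indep (MeasurableSpace.comap a inferInstance)
      (MeasurableSpace.comap b inferInstance ⊔ m₂) μ)
    (hib : Indep (MeasurableSpace.comap b inferInstance) m₂ μ) :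
    μ[fun ω => a ω * ∑ i ∈ s, {ω | b ω = i}.indicator 1 ω * Z i ω | m₂] =ᵐ[μ]
      fun ω => (∫ ω, a ω ∂μ) * ((s.card : ℝ)⁻¹ * ∑ i ∈ s, Z i ω) := by
  have hbi : ∀ i, MeasurableSet {ω | b ω = i} := fun i => hb (measurableSet_singleton i)
  refine (ae_eq_condExp_of_forall_setIntegral_eq hm ?_ (fun t _ _ => Integrable.integrableOn ?_)
    (fun t ht _ => ?_) ?_).symm
  · exact (integrable_finsetSum _ fun i hi => (hZi i hi).indicator_one_mul (hbi i)).bdd_mul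
      ha.aestronglyMeasurable haC
  · exact ((integrable_finsetSum _ hZi).const_mul _).const_mul _
  · have ht' := hm t ht
    have hH : StronglyMeasurable[m₂] (t.indicator (1 : Ω → ℝ)) :=
      stronglyMeasurable_const.indicator ht
    have hHZ : ∀ i ∈ s, AEStronglyMeasurable[m₂] (fun ω => t.indicator 1 ω * Z i ω) μ :=
      fun i hi => hH.aestronglyMeasurable.mul (hZ i hi)
    have hHZi : ∀ i ∈ s, Integrable (fun ω => t.indicator 1 ω * Z i ω) μ :=
      fun i hi => (hZi i hi).indicator_one_mul ht'
    have hbi' : ∀ i, StronglyMeasurable[MeasurableSpace.comap b inferInstance ⊔ m₂]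
        ({ω | b ω = i}.indicator (1 : Ω → ℝ)) := fun i =>
      (stronglyMeasurable_const.indicator (show MeasurableSet[MeasurableSpace.comap b inferInstance]
        {ω | b ω = i} from ⟨{i}, measurableSet_singleton i, rfl⟩)).mono le_sup_left
    have hW : AEStronglyMeasurable[MeasurableSpace.comap b inferInstance ⊔ m₂]
        (fun ω => ∑ i ∈ s, {ω | b ω = i}.indicator 1 ω * (t.indicator 1 ω * Z i ω)) μ :=
      aestronglyMeasurable_sum s fun i hi =>
        (hbi' i).aestronglyMeasurable.mul ((hHZ i hi).mono le_sup_right)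
    have ha' : StronglyMeasurable[MeasurableSpace.comap a inferInstance] a :=
      (Measurable.of_comap_le le_rfl).stronglyMeasurable
    calc ∫ ω in t, (∫ ω, a ω ∂μ) * ((s.card : ℝ)⁻¹ * ∑ i ∈ s, Z i ω) ∂μ
        = ∫ ω, (∫ ω, a ω ∂μ) * ((s.card : ℝ)⁻¹ * ∑ i ∈ s, t.indicator 1 ω * Z i ω) ∂μ := by
          rw [← integral_indicator ht']
          congr 1 with ω
          by_cases hω : ω ∈ t <;> simp [hω, Finset.mul_sum]
      _ = (∫ ω, a ω ∂μ) *
            ∫ ω, ∑ i ∈ s, {ω | b ω = i}.indicator 1 ω * (t.indicator 1 ω * Z i ω) ∂μ := by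
          rw [integral_const_mul, integral_const_mul, integral_finsetSum _ hHZi,
            integral_sum_indicator_mul_of_indep hm hb hib hbs hHZ hHZi]
      _ = ∫ ω, a ω * ∑ i ∈ s, {ω | b ω = i}.indicator 1 ω * (t.indicator 1 ω * Z i ω) ∂μ :=
          (integral_mul_eq_mul_integral_of_indep ha.comap_le (sup_le hb.comap_le hm) hia
            ha'.aestronglyMeasurable hW).symm
      _ = ∫ ω in t, a ω * ∑ i ∈ s, {ω | b ω = i}.indicator 1 ω * Z i ω ∂μ := by
          rw [← integral_indicator ht']
          congr 1 with ω
          by_cases hω : ω ∈ t <;> simp [hω]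
  · exact ((aestronglyMeasurable_sum s hZ).const_mul _).const_mul _
end RandomChoice

lemma erwA_succ (p : ℝ) {n : ℕ} (hn : n ≠ 0) :
    ((n : ℝ) + 2 * p - 1) * erwA p (n + 1) = n * erwA p n := by
  rcases eq_or_ne ((n : ℝ) + 2 * p - 1) 0 with h | h
  · simp [erwA, h]
  have hΓn : Real.Gamma ((n + 1 : ℕ) : ℝ) = n * Real.Gamma n := by
    push_cast; exact Real.Gamma_add_one (by exact_mod_cast hn)
  have hΓ : Real.Gamma (((n + 1 : ℕ) : ℝ) + 2 * p - 1) =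
      ((n : ℝ) + 2 * p - 1) * Real.Gamma ((n : ℝ) + 2 * p - 1) := by
    rw [← Real.Gamma_add_one h]; push_cast; ring_nf
  rw [erwA, erwA, hΓn, hΓ, ← mul_div_assoc, mul_div_mul_left _ _ h]
  ring

lemma erwA_nonneg {p : ℝ} (hp : 0 < p) (n : ℕ) : 0 ≤ erwA p n := by
  rcases Nat.eq_zero_or_pos n with rfl | hn
  · simp [erwA]
  have hn : (1 : ℝ) ≤ n := by exact_mod_cast hn
  unfold erwA
  have := Real.Gamma_pos_of_pos (show (0 : ℝ) < n by linarith)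
  have := Real.Gamma_pos_of_pos (show (0 : ℝ) < 2 * p by linarith)
  have := Real.Gamma_pos_of_pos (show (0 : ℝ) < n + 2 * p - 1 by linarith)
  positivity

lemma erwM_succ_sub (p q : ℝ) {Ω : Type*} (X : ℕ → Ω → ℝ) {n : ℕ} (hn : n ≠ 0) (ω : Ω) :
    erwM p q X (n + 1) ω - erwM p q X n ω =
      erwA p (n + 1) * (X (n + 1) ω - (2 * p - 1) * ((∑ i ∈ Finset.Icc 1 n, X i ω) / n)) := by
  have hrec := erwA_succ p hn
  have hn' : (n : ℝ) ≠ 0 := by exact_mod_cast hn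
  rw [erwM, erwM, if_neg (Nat.succ_ne_zero n), if_neg hn, Finset.sum_Icc_succ_top (by omega)]
  field_simp
  linear_combination (∑ i ∈ Finset.Icc 1 n, X i ω) * hrec

lemma abs_two_mul_pow_three_mul_sub_le {a c y : ℝ} (ha : 0 ≤ a) (hc : |c| ≤ 1) (hy : |y| ≤ 1) :
    |2 * a ^ 3 * ((c * y) ^ 3 - c * y)| ≤ 4 * a ^ 3 * |y| := by
  have hcy : |c * y| ≤ |y| := by
    rw [abs_mul]; exact mul_le_of_le_one_left (abs_nonneg _) hc
  have hsq : |(c * y) ^ 2 - 1| ≤ 1 := by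
    rw [abs_le, ← sq_abs (c * y)]
    constructor <;> nlinarith [abs_nonneg (c * y)]
  calc |2 * a ^ 3 * ((c * y) ^ 3 - c * y)| = 2 * a ^ 3 * (|c * y| * |(c * y) ^ 2 - 1|) := by
        rw [show (c * y) ^ 3 - c * y = c * y * ((c * y) ^ 2 - 1) by ring, abs_mul (2 * a ^ 3),
          abs_of_nonneg (by positivity : (0 : ℝ) ≤ 2 * a ^ 3), abs_mul]
    _ ≤ 2 * a ^ 3 * (|y| * 1) := by gcongr
    _ ≤ 4 * a ^ 3 * |y| := by nlinarith [abs_nonneg y, pow_nonneg ha 3]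

lemma abs_sum_div_le_one {n : ℕ} {x : ℕ → ℝ} (h : ∀ i ∈ Finset.Icc 1 n, |x i| = 1) :
    |(∑ i ∈ Finset.Icc 1 n, x i) / n| ≤ 1 := by
  rw [abs_div, Nat.abs_cast]
  refine div_le_one_of_le₀ ((Finset.abs_sum_le_sum_abs _ _).trans ?_) n.cast_nonneg
  rw [Finset.sum_congr rfl h]
  simp

section Filtration

variable {Ω : Type*} {X A : ℕ → Ω → ℝ} {B : ℕ → Ω → ℕ}

lemma comap_X_one_le_erwFilt {n : ℕ} (hn : n ≠ 0) :
    MeasurableSpace.comap (X 1) inferInstance ≤ erwFilt X A B n := by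
  rw [erwFilt, if_neg hn]
  exact le_sup_left

lemma comap_A_sup_comap_B_le_erwFilt {i n : ℕ} (hi : i ∈ Icc 2 n) :
    MeasurableSpace.comap (A i) inferInstance ⊔ MeasurableSpace.comap (B i) inferInstance ≤
      erwFilt X A B n := by
  rw [erwFilt, if_neg (by grind)]
  exact le_sup_of_le_right (le_biSup (fun i => MeasurableSpace.comap (A i) inferInstance ⊔
    MeasurableSpace.comap (B i) inferInstance) hi)

lemma erwFilt_mono : Monotone (erwFilt X A B) := by
  intro m n hmn
  rcases Nat.eq_zero_or_pos m with rfl | hm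
  · simp [erwFilt]
  rw [erwFilt, if_neg hm.ne', erwFilt, if_neg (by omega)]
  exact sup_le_sup_left (biSup_mono fun i hi => ⟨hi.1, hi.2.trans hmn⟩) _

lemma erwFilt_le [mΩ : MeasurableSpace Ω] (hX : Measurable (X 1)) (hA : ∀ i, Measurable (A i))
    (hB : ∀ i, Measurable (B i)) (n : ℕ) : erwFilt X A B n ≤ mΩ := by
  rw [erwFilt]
  split_ifs
  · exact bot_le
  · exact sup_le hX.comap_le (iSup₂_le fun i _ => sup_le (hA i).comap_le (hB i).comap_le)

abbrev erwFam (X A : ℕ → Ω → ℝ) (B : ℕ → Ω → ℕ) : Unit ⊕ ℕ ⊕ ℕ → MeasurableSpace Ω :=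
  Sum.elim (fun _ => MeasurableSpace.comap (X 1) inferInstance)
    (Sum.elim (fun k => MeasurableSpace.comap (A (k + 2)) inferInstance)
      (fun k => MeasurableSpace.comap (B (k + 2)) inferInstance))

-- `erwFilt X A B n` is generated by the `erwFam X A B i` with `erwTime i ≤ n`.
def erwTime : Unit ⊕ ℕ ⊕ ℕ → ℕ :=
  Sum.elim (fun _ => 1) (Sum.elim (· + 2) (· + 2))

lemma erwFilt_le_iSup_erwFam (n : ℕ) :
    erwFilt X A B n ≤ ⨆ i ∈ {i | erwTime i ≤ n}, erwFam X A B i := by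
  rw [erwFilt]
  split_ifs with hn
  · exact bot_le
  refine sup_le (le_biSup (erwFam X A B) (i := Sum.inl ()) (by simp [erwTime]; omega))
    (iSup₂_le fun i hi => ?_)
  obtain ⟨k, rfl⟩ : ∃ k, i = k + 2 := ⟨i - 2, by grind⟩
  exact sup_le (le_biSup (erwFam X A B) (i := Sum.inr (Sum.inl k)) (by simpa [erwTime] using hi.2))
    (le_biSup (erwFam X A B) (i := Sum.inr (Sum.inr k)) (by simpa [erwTime] using hi.2))

variable [MeasurableSpace Ω] {μ : Measure Ω}

lemma indep_comap_A_erwFilt (hle : ∀ i, erwFam X A B i ≤ ‹MeasurableSpace Ω›)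
    (hindep : iIndep (erwFam X A B) μ) (n : ℕ) :
    Indep (MeasurableSpace.comap (A (n + 2)) inferInstance)
      (MeasurableSpace.comap (B (n + 2)) inferInstance ⊔ erwFilt X A B (n + 1)) μ := by
  have h := indep_iSup_of_disjoint hle hindep (S := {Sum.inr (Sum.inl n)})
    (T := insert (Sum.inr (Sum.inr n)) {i | erwTime i ≤ n + 1})
    (by simp [erwTime])
  rw [iSup_singleton, iSup_insert] at h
  exact indep_of_indep_of_le_right h (sup_le_sup_left (erwFilt_le_iSup_erwFam _) _)

lemma indep_comap_B_erwFilt (hle : ∀ i, erwFam X A B i ≤ ‹MeasurableSpace Ω›)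
    (hindep : iIndep (erwFam X A B) μ) (n : ℕ) :
    Indep (MeasurableSpace.comap (B (n + 2)) inferInstance) (erwFilt X A B (n + 1)) μ := by
  have h := indep_iSup_of_disjoint hle hindep (S := {Sum.inr (Sum.inr n)})
    (T := {i | erwTime i ≤ n + 1}) (by simp [erwTime])
  rw [iSup_singleton] at h
  exact indep_of_indep_of_le_right h (erwFilt_le_iSup_erwFam _)

end Filtration

section Walk

variable {Ω : Type*} {X A : ℕ → Ω → ℝ} {B : ℕ → Ω → ℕ}

lemma abs_X_eq_one_of_forall (hXrec : ∀ n, 2 ≤ n → ∀ ω, X n ω = A n ω * X (B n ω) ω) {ω : Ω}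
    (h1 : |X 1 ω| = 1) (hA : ∀ i, 2 ≤ i → |A i ω| = 1)
    (hB : ∀ i, 2 ≤ i → B i ω ∈ Finset.Icc 1 (i - 1)) : ∀ j, 1 ≤ j → |X j ω| = 1 := by
  intro j
  induction j using Nat.strong_induction_on with
  | _ j ih =>
    intro hj
    rcases hj.eq_or_lt with rfl | hj
    · exact h1
    have hBj := Finset.mem_Icc.1 (hB j hj)
    rw [hXrec j hj, abs_mul, hA j hj, ih _ (by omega) hBj.1, one_mul]

variable [MeasurableSpace Ω] {μ : Measure Ω}

lemma X_succ_ae_eq_sum_indicator_mul (hXrec : ∀ n, 2 ≤ n → ∀ ω, X n ω = A n ω * X (B n ω) ω)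
    {j : ℕ} (hj : 1 ≤ j) (hB : ∀ᵐ ω ∂μ, B (j + 1) ω ∈ Finset.Icc 1 j) :
    X (j + 1) =ᵐ[μ] fun ω =>
      A (j + 1) ω * ∑ i ∈ Finset.Icc 1 j, {ω | B (j + 1) ω = i}.indicator 1 ω * X i ω := by
  filter_upwards [hB] with ω hω
  rw [sum_indicator_mul_eq_of_mem hω, hXrec (j + 1) (by omega)]

-- Only almost everywhere: on a null set `β_j` may leave `{1, …, j − 1}`, and there `X j` depends
-- on variables outside `F_j`.
lemma aestronglyMeasurable_X_erwFilt (hXrec : ∀ n, 2 ≤ n → ∀ ω, X n ω = A n ω * X (B n ω) ω)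
    (hB : ∀ᵐ ω ∂μ, ∀ i, 2 ≤ i → B i ω ∈ Finset.Icc 1 (i - 1)) {j n : ℕ} (hj : 1 ≤ j)
    (hjn : j ≤ n) : AEStronglyMeasurable[erwFilt X A B n] (X j) μ := by
  refine .mono (erwFilt_mono hjn) ?_
  clear hjn
  induction j using Nat.strong_induction_on with
  | _ j ih =>
  rcases hj.eq_or_lt with rfl | hj
  · have hX1 : Measurable[erwFilt X A B 1] (X 1) :=
      .of_comap_le (comap_X_one_le_erwFilt one_ne_zero)
    exact hX1.stronglyMeasurable.aestronglyMeasurable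
  obtain ⟨k, rfl⟩ : ∃ k, j = k + 1 := ⟨j - 1, by omega⟩
  have hAB := comap_A_sup_comap_B_le_erwFilt (X := X) (A := A) (B := B)
    (show k + 1 ∈ Icc 2 (k + 1) from ⟨hj, le_rfl⟩)
  refine AEStronglyMeasurable.congr ?_ (X_succ_ae_eq_sum_indicator_mul hXrec (by omega)
    (hB.mono fun ω h => by simpa using h (k + 1) hj)).symm
  have hA : Measurable[erwFilt X A B (k + 1)] (A (k + 1)) := .of_comap_le (le_sup_left.trans hAB)
  have hB : Measurable[erwFilt X A B (k + 1)] (B (k + 1)) := .of_comap_le (le_sup_right.trans hAB)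
  refine hA.stronglyMeasurable.aestronglyMeasurable.fun_mul
    (aestronglyMeasurable_sum _ fun i hi => ?_)
  have hi := Finset.mem_Icc.1 hi
  have hBi : StronglyMeasurable[erwFilt X A B (k + 1)]
      ({ω | B (k + 1) ω = i}.indicator (1 : Ω → ℝ)) :=
    stronglyMeasurable_one.indicator
      (show MeasurableSet[erwFilt X A B (k + 1)] {ω | B (k + 1) ω = i} from
        hB (measurableSet_singleton i))
  exact hBi.aestronglyMeasurable.fun_mul ((ih i (by omega) hi.1).mono (erwFilt_mono (by omega)))

end Walk

section Moments

variable {Ω : Type*} [MeasurableSpace Ω] {μ : Measure Ω} {X A : ℕ → Ω → ℝ} {B : ℕ → Ω → ℕ}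

lemma ae_forall_B_mem [IsProbabilityMeasure μ] (hBm : ∀ i, Measurable (B i))
    (hB : ∀ n, 2 ≤ n → ∀ k ∈ Finset.Icc 1 (n - 1),
      μ {ω | B n ω = k} = (((n - 1 : ℕ) : ℝ≥0∞))⁻¹) :
    ∀ᵐ ω ∂μ, ∀ i, 2 ≤ i → B i ω ∈ Finset.Icc 1 (i - 1) := by
  refine ae_all_iff.2 fun i => ?_
  by_cases hi : 2 ≤ i
  · have hcard : ((Finset.Icc 1 (i - 1)).card : ℝ≥0∞) = ((i - 1 : ℕ) : ℝ≥0∞) := by simp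
    filter_upwards [ae_mem_of_measure_eq_inv_card (hBm i) ⟨1, Finset.mem_Icc.2 ⟨le_rfl, by omega⟩⟩
      (hcard ▸ hB i hi)] with ω h _ using h
  · exact ae_of_all _ fun ω h => absurd h hi

lemma ae_forall_abs_X_eq_one [IsProbabilityMeasure μ] {p q : ℝ} (hp₀ : 0 ≤ p) (hp₁ : p ≤ 1)
    (hq₀ : 0 ≤ q) (hq₁ : q ≤ 1) (hX1m : Measurable (X 1)) (hAm : ∀ i, Measurable (A i))
    (hX1 : μ {ω | X 1 ω = 1} = ENNReal.ofReal q)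
    (hX1' : μ {ω | X 1 ω = -1} = ENNReal.ofReal (1 - q))
    (hA : ∀ n, 2 ≤ n → μ {ω | A n ω = 1} = ENNReal.ofReal p)
    (hA' : ∀ n, 2 ≤ n → μ {ω | A n ω = -1} = ENNReal.ofReal (1 - p))
    (hXrec : ∀ n, 2 ≤ n → ∀ ω, X n ω = A n ω * X (B n ω) ω)
    (hB : ∀ᵐ ω ∂μ, ∀ i, 2 ≤ i → B i ω ∈ Finset.Icc 1 (i - 1)) :
    ∀ᵐ ω ∂μ, ∀ j, 1 ≤ j → |X j ω| = 1 := by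
  have habs : ∀ x : ℝ, x = 1 ∨ x = -1 → |x| = 1 := by rintro x (rfl | rfl) <;> simp
  have hA_ae : ∀ᵐ ω ∂μ, ∀ i, 2 ≤ i → |A i ω| = 1 := by
    refine ae_all_iff.2 fun i => ?_
    by_cases hi : 2 ≤ i
    · filter_upwards [ae_eq_one_or_eq_neg_one (hAm i) hp₀ hp₁ (hA i hi) (hA' i hi)] with ω h _
        using habs _ h
    · exact ae_of_all _ fun ω h => absurd h hi
  filter_upwards [ae_eq_one_or_eq_neg_one hX1m hq₀ hq₁ hX1 hX1', hA_ae, hB] with ω h1 hA hB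
    using abs_X_eq_one_of_forall hXrec (habs _ h1) hA hB

theorem condExp_X_erwFilt [IsProbabilityMeasure μ] {p : ℝ} (hp₀ : 0 ≤ p) (hp₁ : p ≤ 1)
    (hXm : ∀ n, Measurable (X n)) (hAm : ∀ n, Measurable (A n)) (hBm : ∀ n, Measurable (B n))
    (hA : ∀ n, 2 ≤ n → μ {ω | A n ω = 1} = ENNReal.ofReal p)
    (hA' : ∀ n, 2 ≤ n → μ {ω | A n ω = -1} = ENNReal.ofReal (1 - p))
    (hB : ∀ n, 2 ≤ n → ∀ k ∈ Finset.Icc 1 (n - 1),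
      μ {ω | B n ω = k} = (((n - 1 : ℕ) : ℝ≥0∞))⁻¹)
    (hXrec : ∀ n, 2 ≤ n → ∀ ω, X n ω = A n ω * X (B n ω) ω)
    (hindep : iIndep (erwFam X A B) μ) (hXabs : ∀ᵐ ω ∂μ, ∀ j, 1 ≤ j → |X j ω| = 1) (n : ℕ) :
    μ[X (n + 2) | erwFilt X A B (n + 1)] =ᵐ[μ]
      fun ω => (2 * p - 1) * ((∑ i ∈ Finset.Icc 1 (n + 1), X i ω) / (n + 1)) := by
  have h2 : 2 ≤ n + 2 := by omega
  have hBae := ae_forall_B_mem hBm hB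
  have hle : ∀ i, erwFam X A B i ≤ ‹MeasurableSpace Ω› := by
    rintro (_ | k | k)
    exacts [(hXm 1).comap_le, (hAm _).comap_le, (hBm _).comap_le]
  have hAC : ∀ᵐ ω ∂μ, ‖A (n + 2) ω‖ ≤ 1 :=
    (ae_eq_one_or_eq_neg_one (hAm _) hp₀ hp₁ (hA _ h2) (hA' _ h2)).mono
      fun ω h => by rcases h with h | h <;> simp [h]
  have hXi : ∀ i ∈ Finset.Icc 1 (n + 1), Integrable (X i) μ := fun i hi =>
    .of_bound (hXm i).aestronglyMeasurable 1
      (hXabs.mono fun ω h => (h i (Finset.mem_Icc.1 hi).1).le)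
  refine (condExp_congr_ae (X_succ_ae_eq_sum_indicator_mul hXrec (j := n + 1) (by omega)
    (hBae.mono fun ω h => by simpa using h (n + 2) h2))).trans ?_
  refine (condExp_mul_sum_indicator_mul_of_indep (erwFilt_le (hXm 1) hAm hBm _) (hAm _) hAC
    (hBm _) (by simpa using hB (n + 2) h2)
    (fun i hi => aestronglyMeasurable_X_erwFilt hXrec hBae (Finset.mem_Icc.1 hi).1
      (Finset.mem_Icc.1 hi).2) hXi
    (indep_comap_A_erwFilt hle hindep n) (indep_comap_B_erwFilt hle hindep n)).trans ?_
  refine ae_of_all _ fun ω => ?_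
  rw [integral_eq_two_mul_sub_one (hAm _) hp₀ hp₁ (hA _ h2) (hA' _ h2),
    Nat.card_Icc]
  push_cast
  ring

theorem condExp_erwM_increment_pow_three [IsFiniteMeasure μ] {p q : ℝ} {n : ℕ}
    (hF : erwFilt X A B (n + 1) ≤ ‹MeasurableSpace Ω›) (hXm : Measurable (X (n + 2)))
    (hX2 : ∀ᵐ ω ∂μ, X (n + 2) ω ^ 2 = 1)
    (hmean : μ[X (n + 2) | erwFilt X A B (n + 1)] =ᵐ[μ]
      fun ω => (2 * p - 1) * ((∑ i ∈ Finset.Icc 1 (n + 1), X i ω) / (n + 1))) :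
    μ[fun ω => (erwM p q X (n + 2) ω - erwM p q X (n + 1) ω) ^ 3 | erwFilt X A B (n + 1)]
      =ᵐ[μ] fun ω => 2 * erwA p (n + 2) ^ 3 *
        (((2 * p - 1) * ((∑ i ∈ Finset.Icc 1 (n + 1), X i ω) / (n + 1))) ^ 3 -
          (2 * p - 1) * ((∑ i ∈ Finset.Icc 1 (n + 1), X i ω) / (n + 1))) := by
  set F := erwFilt X A B (n + 1)
  have hinc : (fun ω => (erwM p q X (n + 2) ω - erwM p q X (n + 1) ω) ^ 3) =ᵐ[μ]
      erwA p (n + 2) ^ 3 • fun ω => (X (n + 2) ω - μ[X (n + 2) | F] ω) ^ 3 := by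
    filter_upwards [hmean] with ω h
    rw [erwM_succ_sub p q X (Nat.succ_ne_zero n), Pi.smul_apply, h, smul_eq_mul]
    push_cast
    ring
  filter_upwards [(condExp_congr_ae hinc).trans (condExp_smul _ _ F),
    condExp_sub_condExp_pow_three hF hXm.aestronglyMeasurable hX2, hmean] with ω h h3 hY
  rw [h, Pi.smul_apply, h3, hY, smul_eq_mul]
  ring

end Moments

/-- Conditional third moment of the ERW martingale differences: for every `k ≥ 2`, almost surely
`E[(ΔM_k)³ | F_{k−1}] = 2(2p−1) a_k³ (−T_{k−1}/(k−1) + (2p−1)² T_{k−1}³/(k−1)³)`; in particular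
`|E[(ΔM_k)³ | F_{k−1}]| ≤ 4 a_k³ |T_{k−1}/(k−1)|` almost surely. -/
theorem erw_cond_third_moment
    (p q : ℝ) (hp : p ∈ Set.Ioc (0 : ℝ) 1) (hq : q ∈ Set.Ioc (0 : ℝ) 1)
    {Ω : Type} [MeasurableSpace Ω] (μ : Measure Ω) [IsProbabilityMeasure μ]
    (X A : ℕ → Ω → ℝ) (B : ℕ → Ω → ℕ)
    (hXmeas : ∀ n, Measurable (X n)) (hAmeas : ∀ n, Measurable (A n))
    (hBmeas : ∀ n, Measurable (B n))
    (hX1 : μ {ω | X 1 ω = 1} = ENNReal.ofReal q)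
    (hX1' : μ {ω | X 1 ω = -1} = ENNReal.ofReal (1 - q))
    (hA : ∀ n, 2 ≤ n → μ {ω | A n ω = 1} = ENNReal.ofReal p)
    (hA' : ∀ n, 2 ≤ n → μ {ω | A n ω = -1} = ENNReal.ofReal (1 - p))
    (hB : ∀ n, 2 ≤ n → ∀ k ∈ Finset.Icc 1 (n - 1),
      μ {ω | B n ω = k} = (((n - 1 : ℕ) : ℝ≥0∞))⁻¹)
    (hXrec : ∀ n, 2 ≤ n → ∀ ω, X n ω = A n ω * X (B n ω) ω)
    (hindep : iIndep (Sum.elim (fun _ : Unit => MeasurableSpace.comap (X 1) inferInstance)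
        (Sum.elim (fun k : ℕ => MeasurableSpace.comap (A (k + 2)) inferInstance)
          (fun k : ℕ => MeasurableSpace.comap (B (k + 2)) inferInstance))) μ)
    :
    ∀ k : ℕ, 2 ≤ k →
      (μ[fun ω => (erwM p q X k ω - erwM p q X (k - 1) ω) ^ 3 | erwFilt X A B (k - 1)]
        =ᵐ[μ] fun ω =>
          2 * (2 * p - 1) * erwA p k ^ 3 *
            (-((∑ i ∈ Finset.Icc 1 (k - 1), X i ω) / ((k : ℝ) - 1)) +
              (2 * p - 1) ^ 2 * (∑ i ∈ Finset.Icc 1 (k - 1), X i ω) ^ 3 / ((k : ℝ) - 1) ^ 3)) ∧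
      (∀ᵐ ω ∂μ,
        abs ((μ[fun ω' => (erwM p q X k ω' - erwM p q X (k - 1) ω') ^ 3 |
              erwFilt X A B (k - 1)]) ω)
          ≤ 4 * erwA p k ^ 3 * abs ((∑ i ∈ Finset.Icc 1 (k - 1), X i ω) / ((k : ℝ) - 1))) := by
  intro k hk
  obtain ⟨n, rfl⟩ : ∃ n, k = n + 2 := ⟨k - 2, by omega⟩
  have hXabs := ae_forall_abs_X_eq_one hp.1.le hp.2 hq.1.le hq.2 (hXmeas 1) hAmeas hX1 hX1' hA
    hA' hXrec (ae_forall_B_mem hBmeas hB)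
  have hcube := condExp_erwM_increment_pow_three (q := q)
    (erwFilt_le (hXmeas 1) hAmeas hBmeas (n + 1)) (hXmeas (n + 2))
    (hXabs.mono fun ω h => by rw [← sq_abs, h (n + 2) (by omega), one_pow])
    (condExp_X_erwFilt hp.1.le hp.2 hXmeas hAmeas hBmeas hA hA' hB hXrec hindep hXabs n)
  have hk : ((n + 2 : ℕ) : ℝ) - 1 = n + 1 := by push_cast; ring
  rw [show n + 2 - 1 = n + 1 from rfl, hk]
  refine ⟨hcube.trans (ae_of_all _ fun ω => by simp only [mul_div_assoc, ← div_pow]; ring), ?_⟩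
  filter_upwards [hcube, hXabs] with ω hω hX
  have hy := abs_sum_div_le_one (n := n + 1) fun i hi => hX i (Finset.mem_Icc.1 hi).1
  push_cast at hy
  rw [hω]
  exact abs_two_mul_pow_three_mul_sub_le (erwA_nonneg hp.1 _)
    (abs_le.2 ⟨by linarith [hp.1], by linarith [hp.2]⟩) hy
end

section
/- Asymptotics of the variance sequence in the diffusive regime: for every p ∈ (0, 3/4), lim_{n→∞} vₙ / n^{3−4p} = Γ(2p)² / (3−4p). -/
open MeasureTheory ProbabilityTheory Filter Set

/-!
Since `aₙ₊₁ = n! / (2p (2p + 1) ⋯ (2p + n - 1))`, Euler's limit formula for `Γ` gives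
`aₙ₊₁ ~ Γ(2p) n^{1-2p}`, so `aₙ₊₁² ~ Γ(2p)² n^{s-1}` with `s = 3 - 4p > 0`. Comparing with the
telescoping increments `(n + 1)^s - n^s ~ s n^{s-1}` (Stolz–Cesàro) gives `vₙ ~ Γ(2p)² n^s / s`.
-/

open Finset Topology Asymptotics
open scoped Nat

theorem tendsto_sum_range_div_sum_range_of_tendsto_div {b g : ℕ → ℝ} {L : ℝ}
    (hg : ∀ n, 0 < g n) (hg_sum : Tendsto (fun n ↦ ∑ i ∈ range n, g i) atTop atTop)
    (h : Tendsto (fun n ↦ b n / g n) atTop (𝓝 L)) :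
    Tendsto (fun n ↦ (∑ i ∈ range n, b i) / ∑ i ∈ range n, g i) atTop (𝓝 L) := by
  have hlittle : (fun n ↦ b n - L * g n) =o[atTop] g := by
    refine (isLittleO_iff_tendsto' (.of_forall fun n hn ↦ absurd hn (hg n).ne')).2 ?_
    simpa [sub_div, mul_div_cancel_right₀ _ (hg _).ne'] using h.sub_const L
  have hsum := (hlittle.sum_range (fun n ↦ (hg n).le) hg_sum).tendsto_div_nhds_zero
  simp only [sum_sub_distrib, ← mul_sum] at hsum
  rw [← zero_add L]
  refine (hsum.add_const L).congr' ?_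
  filter_upwards [hg_sum.eventually_gt_atTop 0] with n hn
  field_simp
  ring

theorem tendsto_rpow_add_one_sub_rpow_div_rpow (s : ℝ) :
    Tendsto (fun n : ℕ ↦ (((n : ℝ) + 1) ^ s - (n : ℝ) ^ s) / (n : ℝ) ^ (s - 1)) atTop (𝓝 s) := by
  have hslope : Tendsto (slope (fun x : ℝ ↦ x ^ s) 1) (𝓝[≠] 1) (𝓝 s) := by
    simpa using (Real.hasDerivAt_rpow_const (x := 1) (p := s) (.inl one_ne_zero)).tendsto_slope
  have hseq : Tendsto (fun n : ℕ ↦ 1 + (n : ℝ)⁻¹) atTop (𝓝[≠] 1) := by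
    refine tendsto_nhdsWithin_iff.2 ⟨?_, ?_⟩
    · simpa using (tendsto_inv_atTop_nhds_zero_nat (𝕜 := ℝ)).const_add 1
    · filter_upwards [eventually_ne_atTop 0] with n hn
      simpa using hn
  refine (hslope.comp hseq).congr' ?_
  filter_upwards [eventually_ne_atTop 0] with n hn
  have hn0 : (0 : ℝ) < n := by positivity
  have hdiv : (1 + (n : ℝ)⁻¹) ^ s = ((n : ℝ) + 1) ^ s / (n : ℝ) ^ s := by
    rw [← Real.div_rpow (by positivity) hn0.le, add_div, div_self hn0.ne', one_div]
  have := (Real.rpow_pos_of_pos hn0 s).ne'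
  simp only [Function.comp_apply, slope_def_field, Real.one_rpow, hdiv, add_sub_cancel_left]
  rw [Real.rpow_sub_one hn0.ne']
  field_simp

theorem tendsto_sum_range_div_rpow_of_tendsto_div_rpow {b : ℕ → ℝ} {c s : ℝ} (hs : 0 < s)
    (hb : Tendsto (fun n : ℕ ↦ b n / (n : ℝ) ^ (s - 1)) atTop (𝓝 c)) :
    Tendsto (fun n : ℕ ↦ (∑ i ∈ range n, b i) / (n : ℝ) ^ s) atTop (𝓝 (c / s)) := by
  set g : ℕ → ℝ := fun n ↦ ((n : ℝ) + 1) ^ s - (n : ℝ) ^ s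
  have hg : ∀ n, 0 < g n := fun n ↦
    sub_pos.2 (Real.rpow_lt_rpow n.cast_nonneg (lt_add_one _) hs)
  have hg_sum : ∀ n, ∑ i ∈ range n, g i = (n : ℝ) ^ s := fun n ↦ by
    have := sum_range_sub (fun i : ℕ ↦ (i : ℝ) ^ s) n
    simp only [Nat.cast_succ, Nat.cast_zero, Real.zero_rpow hs.ne', sub_zero] at this
    exact this
  have hbg : Tendsto (fun n ↦ b n / g n) atTop (𝓝 (c / s)) := by
    refine (hb.div (tendsto_rpow_add_one_sub_rpow_div_rpow s) hs.ne').congr' ?_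
    filter_upwards [eventually_ne_atTop 0] with n hn
    have := (Real.rpow_pos_of_pos (Nat.cast_pos.2 (Nat.pos_of_ne_zero hn)) (s - 1)).ne'
    exact div_div_div_cancel_right₀ this _ _
  have hg_top : Tendsto (fun n ↦ ∑ i ∈ range n, g i) atTop atTop := by
    simpa only [hg_sum, Function.comp_def] using
      (tendsto_rpow_atTop hs).comp tendsto_natCast_atTop_atTop
  simpa only [hg_sum] using tendsto_sum_range_div_sum_range_of_tendsto_div hg hg_top hbg

theorem Real.Gamma_add_nat_eq_mul_prod {x : ℝ} (hx : 0 < x) (n : ℕ) :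
    Real.Gamma (x + n) = Real.Gamma x * ∏ j ∈ range n, (x + j) := by
  induction n with
  | zero => simp
  | succ n ih =>
    rw [Nat.cast_succ, ← add_assoc, Real.Gamma_add_one (by positivity), ih, prod_range_succ]
    ring

theorem tendsto_factorial_div_prod_div_rpow {x : ℝ} (hx : 0 < x) :
    Tendsto (fun n : ℕ ↦ (n ! : ℝ) / (∏ j ∈ range n, (x + j)) / (n : ℝ) ^ (1 - x)) atTop
      (𝓝 (Real.Gamma x)) := by
  have hratio : Tendsto (fun n : ℕ ↦ (x + n) / n) atTop (𝓝 1) := by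
    have := (tendsto_const_div_atTop_nhds_zero_nat x).const_add 1
    rw [add_zero] at this
    refine this.congr' ?_
    filter_upwards [eventually_ne_atTop 0] with n hn
    field_simp
    ring
  rw [← mul_one (Real.Gamma x)]
  refine ((Real.GammaSeq_tendsto_Gamma x).mul hratio).congr' ?_
  filter_upwards [eventually_ne_atTop 0] with n hn
  have hn0 : (0 : ℝ) < n := by positivity
  have : ∏ j ∈ range n, (x + j) ≠ 0 := prod_ne_zero_iff.2 fun j _ ↦ by positivity
  have : (x + n) ≠ 0 := by positivity
  have := (Real.rpow_pos_of_pos hn0 x).ne'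
  rw [Real.GammaSeq, prod_range_succ, Real.rpow_sub hn0, Real.rpow_one]
  field_simp

theorem erwA_succ_s17 {p : ℝ} (hp : 0 < p) (n : ℕ) :
    erwA p (n + 1) = n ! / ∏ j ∈ range n, (2 * p + j) := by
  have h2p : 0 < 2 * p := by positivity
  rw [erwA, Nat.cast_succ, show (n : ℝ) + 1 + 2 * p - 1 = 2 * p + n by ring,
    Real.Gamma_add_nat_eq_mul_prod h2p, Real.Gamma_nat_eq_factorial]
  field_simp [(Real.Gamma_pos_of_pos h2p).ne']

theorem erwV_eq_sum_range (p : ℝ) (n : ℕ) : erwV p n = ∑ i ∈ range n, erwA p (i + 1) ^ 2 := by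
  rw [erwV, ← Finset.Ico_add_one_right_eq_Icc, range_eq_Ico, sum_Ico_add' (fun i ↦ erwA p i ^ 2)]

/-- Asymptotics of the variance sequence in the diffusive regime: for every `p ∈ (0, 3/4)`,
`lim_{n→∞} vₙ / n^{3−4p} = Γ(2p)² / (3−4p)`. -/
theorem erw_v_asymptotics_diffusive (p : ℝ) (hp : p ∈ Set.Ioo (0 : ℝ) (3 / 4)) :
    Tendsto (fun n : ℕ => erwV p n / (n : ℝ) ^ (3 - 4 * p)) atTop
      (nhds (Real.Gamma (2 * p) ^ 2 / (3 - 4 * p))) := by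
  obtain ⟨hp0, hp34⟩ := hp
  have ha := tendsto_factorial_div_prod_div_rpow (x := 2 * p) (by positivity)
  have hb : Tendsto (fun n : ℕ ↦ erwA p (n + 1) ^ 2 / (n : ℝ) ^ (3 - 4 * p - 1)) atTop
      (𝓝 (Real.Gamma (2 * p) ^ 2)) := by
    refine (ha.pow 2).congr fun n ↦ ?_
    rw [erwA_succ_s17 hp0, div_pow, ← Real.rpow_natCast ((n : ℝ) ^ (1 - 2 * p)),
      ← Real.rpow_mul n.cast_nonneg]
    congr 2
    push_cast
    ring
  simpa only [erwV_eq_sum_range] using tendsto_sum_range_div_rpow_of_tendsto_div_rpow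
    (by linarith) hb
end
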